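/- arXiv:1310.8486 — 4 statements merged into one kernel-verified Lean document; each statement's English description precedes it below -/
import Mathlib

section
/- The function f(x) = x(e^{λ(W/x + C)} − 1), for real x > 0, is convex in x and admits a unique minimizer x* > 0, characterized by the equation e^{λ(W/x* + C)}(1 − λW/x*) = 1. -/
/-!
Writing `g x = exp (l * (W / x + C)) * (1 - l * W / x)`, the derivative of the cost is `g x - 1`,
and `g x = exp (l * C) * h (l * W / x)` with `h t = exp t * (1 - t)` strictly decreasing on
`t ≥ 0`. Hence the derivative is strictly increasing, so the cost is strictly convex and its
minimizers are exactly the roots of `g x = 1`. Such a root exists by the intermediate value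
theorem: `g (l * W) = 0`, while `g x → exp (l * C) > 1` as `x → ∞`.
-/

open Set Filter Topology Real

theorem ConvexOn.isMinOn_iff_hasDerivAt_eq_zero {S : Set ℝ} {f : ℝ → ℝ} {f' x : ℝ}
    (hf : ConvexOn ℝ S f) (hx : x ∈ interior S) (hf' : HasDerivAt f f' x) :
    IsMinOn f S x ↔ f' = 0 := by
  refine ⟨fun hmin => (hmin.isLocalMin (mem_interior_iff_mem_nhds.mp hx)).hasDerivAt_eq_zero hf',
    fun h => hf.isMinOn_of_rightDeriv_eq_zero hx ?_⟩
  rw [hf'.hasDerivWithinAt.derivWithin (uniqueDiffWithinAt_Ioi x), h]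

theorem strictAntiOn_exp_mul_one_sub : StrictAntiOn (fun t : ℝ => exp t * (1 - t)) (Ici 0) := by
  refine strictAntiOn_of_deriv_neg (convex_Ici 0) (by fun_prop) fun t ht => ?_
  rw [interior_Ici] at ht
  have hderiv : HasDerivAt (fun t : ℝ => exp t * (1 - t)) (-(t * exp t)) t := by
    refine ((hasDerivAt_exp t).mul ((hasDerivAt_id t).const_sub 1)).congr_deriv ?_
    simp only [id]
    ring
  rw [hderiv.deriv, neg_lt_zero]
  exact mul_pos ht (exp_pos t)

section CheckpointCost

variable {l W C : ℝ}

variable (l W C) in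
noncomputable def checkpointCost : ℝ → ℝ := fun x => x * (exp (l * (W / x + C)) - 1)

theorem hasDerivAt_checkpointCost {x : ℝ} (hx : x ≠ 0) :
    HasDerivAt (checkpointCost l W C) (exp (l * (W / x + C)) * (1 - l * W / x) - 1) x := by
  have hinner : HasDerivAt (fun x : ℝ => l * (W / x + C)) (l * (W * -(x ^ 2)⁻¹)) x := by
    have := (hasDerivAt_inv hx).const_mul W
    simp only [← div_eq_mul_inv] at this
    exact (this.add_const C).const_mul l
  refine ((hasDerivAt_id x).mul (hinner.exp.sub_const 1)).congr_deriv ?_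
  simp only [id]
  field_simp
  ring

theorem exp_mul_one_sub_eq {x : ℝ} :
    exp (l * (W / x + C)) * (1 - l * W / x) = exp (l * C) * (exp (l * W / x) * (1 - l * W / x)) := by
  rw [mul_add, ← mul_div_assoc, exp_add]
  ring

theorem strictMonoOn_exp_mul_one_sub_div (hlW : 0 < l * W) :
    StrictMonoOn (fun x => exp (l * (W / x + C)) * (1 - l * W / x)) (Ioi 0) := by
  intro a ha b hb hab
  have hdiv : l * W / b < l * W / a := div_lt_div_of_pos_left hlW ha hab
  have := strictAntiOn_exp_mul_one_sub (div_pos hlW hb).le (div_pos hlW ha).le hdiv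
  simp only [exp_mul_one_sub_eq (C := C)]
  exact mul_lt_mul_of_pos_left this (exp_pos _)

theorem strictConvexOn_checkpointCost (hlW : 0 < l * W) :
    StrictConvexOn ℝ (Ioi 0) (checkpointCost l W C) := by
  have hderiv : ∀ x ∈ Ioi (0 : ℝ), HasDerivAt (checkpointCost l W C)
      (exp (l * (W / x + C)) * (1 - l * W / x) - 1) x :=
    fun x hx => hasDerivAt_checkpointCost (ne_of_gt hx)
  refine StrictMonoOn.strictConvexOn_of_deriv (convex_Ioi 0)
    (fun x hx => (hderiv x hx).continuousAt.continuousWithinAt) ?_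
  rw [interior_Ioi]
  intro a ha b hb hab
  rw [(hderiv a ha).deriv, (hderiv b hb).deriv, sub_lt_sub_iff_right]
  exact strictMonoOn_exp_mul_one_sub_div hlW ha hb hab

theorem isMinOn_checkpointCost_iff (hlW : 0 < l * W) {x : ℝ} (hx : 0 < x) :
    IsMinOn (checkpointCost l W C) (Ioi 0) x ↔ exp (l * (W / x + C)) * (1 - l * W / x) = 1 := by
  rw [(strictConvexOn_checkpointCost hlW).convexOn.isMinOn_iff_hasDerivAt_eq_zero
    (by rwa [interior_Ioi]) (hasDerivAt_checkpointCost hx.ne'), sub_eq_zero]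

theorem exists_pos_exp_mul_one_sub_div_eq_one (hlW : 0 < l * W) (hlC : 0 < l * C) :
    ∃ x, 0 < x ∧ exp (l * (W / x + C)) * (1 - l * W / x) = 1 := by
  set g : ℝ → ℝ := fun x => exp (l * (W / x + C)) * (1 - l * W / x)
  have hcont : ContinuousOn g (Ioi 0) := by
    have hdiv : ∀ c : ℝ, ContinuousOn (fun x : ℝ => c / x) (Ioi 0) :=
      fun c => continuousOn_const.div continuousOn_id fun x hx => ne_of_gt hx
    exact (((hdiv W).add continuousOn_const).const_smul l).rexp.mul
      (continuousOn_const.sub (hdiv (l * W)))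
  have hlim : Tendsto g atTop (𝓝 (exp (l * C))) := by
    have hdiv : ∀ c : ℝ, Tendsto (fun x : ℝ => c / x) atTop (𝓝 0) :=
      fun c => tendsto_const_nhds.div_atTop tendsto_id
    convert ((((hdiv W).add_const C).const_mul l).rexp).mul
      (tendsto_const_nhds.sub (hdiv (l * W))) using 2
    simp
  have hmem : (1 : ℝ) ∈ Ico (g (l * W)) (exp (l * C)) := by
    simp only [g, div_self hlW.ne', sub_self, mul_zero]
    exact ⟨zero_le_one, one_lt_exp_iff.mpr hlC⟩
  obtain ⟨x, hx, hgx⟩ := isPreconnected_Ioi.intermediate_value_Ico (mem_Ioi.mpr hlW)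
    (le_principal_iff.mpr (Ioi_mem_atTop 0)) hcont hlim hmem
  exact ⟨x, hx, hgx⟩

end CheckpointCost

/-- f(x) = x(e^{λ(W/x + C)} − 1) is convex on (0,∞) and admits a unique minimizer
x* > 0, characterized by e^{λ(W/x* + C)}(1 − λW/x*) = 1. -/
theorem convex_unique_minimizer (l W C : ℝ) (hl : 0 < l) (hW : 0 < W) (hC : 0 < C) :
    ConvexOn ℝ (Ioi 0) (fun x : ℝ => x * (Real.exp (l * (W / x + C)) - 1)) ∧
    (∃! x : ℝ, 0 < x ∧
      IsMinOn (fun x : ℝ => x * (Real.exp (l * (W / x + C)) - 1)) (Ioi 0) x) ∧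
    (∀ x : ℝ, 0 < x →
      (IsMinOn (fun x : ℝ => x * (Real.exp (l * (W / x + C)) - 1)) (Ioi 0) x ↔
        Real.exp (l * (W / x + C)) * (1 - l * W / x) = 1)) := by
  have hlW : 0 < l * W := mul_pos hl hW
  have hconvex : StrictConvexOn ℝ (Ioi 0) (checkpointCost l W C) :=
    strictConvexOn_checkpointCost hlW
  obtain ⟨x₀, hx₀, hroot⟩ := exists_pos_exp_mul_one_sub_div_eq_one (C := C) hlW (mul_pos hl hC)
  refine ⟨hconvex.convexOn, ⟨x₀, ⟨hx₀, (isMinOn_checkpointCost_iff hlW hx₀).mpr hroot⟩, ?_⟩,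
    fun x hx => isMinOn_checkpointCost_iff hlW hx⟩
  rintro y ⟨hy, hmin⟩
  exact hconvex.eq_of_isMinOn hmin ((isMinOn_checkpointCost_iff hlW hx₀).mpr hroot) hy hx₀
end

section
/- Let z > 0 satisfy (z − 1)e^z = −e^{−λC}. Then, as λC → 0⁺, z = √(2λC) + O(λC); consequently the optimal period T = z/λ + C satisfies T = √(2C/λ) + C + o(√(C/λ)). -/
/-! With `u = λC` the equation reads `(1 - z) eᶻ = e⁻ᵘ`. Since `(1 - z) eᶻ = 1 - z²/2 + O(z³)` and
`e⁻ᵘ = 1 - u + O(u²)`, one gets `z² ≤ 2u` and `2u - z² = O(u² + z³) = O(u^{3/2})`; dividing by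
`√(2u) + z ≥ √(2u)` gives `|z - √(2u)| = O(u)`. The claim on `T` follows because `λC = o(√(C/λ))`. -/

open Filter Asymptotics Real Topology

lemma one_sub_mul_exp_le {z : ℝ} (h0 : 0 ≤ z) (h1 : z ≤ 1) : (1 - z) * exp z ≤ 1 - z ^ 2 / 2 := by
  have hexp : exp z ≤ 1 + z + z ^ 2 / 2 + z ^ 3 * (2 / 9) := by
    have h := exp_bound' h0 h1 (n := 3) (by norm_num)
    norm_num [Finset.sum_range_succ, Nat.factorial] at h
    linarith
  calc (1 - z) * exp z ≤ (1 - z) * (1 + z + z ^ 2 / 2 + z ^ 3 * (2 / 9)) :=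
        mul_le_mul_of_nonneg_left hexp (by linarith)
    _ ≤ 1 - z ^ 2 / 2 := by nlinarith [pow_nonneg h0 3, pow_nonneg h0 4]

lemma le_one_sub_mul_exp {z : ℝ} (h0 : 0 ≤ z) (h1 : z ≤ 1) :
    1 - z ^ 2 / 2 - z ^ 3 / 2 ≤ (1 - z) * exp z :=
  calc 1 - z ^ 2 / 2 - z ^ 3 / 2 = (1 - z) * (1 + z + z ^ 2 / 2) := by ring
    _ ≤ (1 - z) * exp z := mul_le_mul_of_nonneg_left (quadratic_le_exp_of_nonneg h0) (by linarith)

lemma exp_neg_le_one_sub_add_sq {u : ℝ} (hu : 0 ≤ u) : exp (-u) ≤ 1 - u + u ^ 2 := by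
  have hinv : exp (-u) * exp u = 1 := by rw [← exp_add, neg_add_cancel, exp_zero]
  nlinarith [add_one_le_exp u, exp_pos (-u), pow_nonneg hu 3]

lemma abs_sub_sqrt_two_mul_le_of_one_sub_mul_exp_eq {u z : ℝ} (hu0 : 0 < u) (hu2 : u ≤ 2)
    (hz : 0 ≤ z) (h : (1 - z) * exp z = exp (-u)) : |z - √(2 * u)| ≤ 4 * u := by
  have hz1 : z ≤ 1 := by
    by_contra! hz1
    nlinarith [exp_pos z, exp_pos (-u)]
  set t := √(2 * u)
  have ht0 : 0 < t := sqrt_pos.mpr (by linarith)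
  have ht2 : t ^ 2 = 2 * u := sq_sqrt (by linarith)
  have hzt : z ≤ t := by nlinarith [one_sub_mul_exp_le hz hz1, one_sub_le_exp_neg u]
  have hsq : t ^ 2 - z ^ 2 ≤ 2 * u ^ 2 + z ^ 3 := by
    nlinarith [le_one_sub_mul_exp hz hz1, exp_neg_le_one_sub_add_sq hu0.le]
  have hut : u ≤ t := by nlinarith
  have hdiff : t * (t - z) ≤ t * (4 * u) := by
    calc t * (t - z) ≤ (t + z) * (t - z) := by nlinarith
      _ ≤ 2 * u ^ 2 + z ^ 3 := by nlinarith
      _ ≤ 2 * u * t + t ^ 3 := by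
        nlinarith [pow_le_pow_left₀ hz hzt 3, mul_le_mul_of_nonneg_left hut hu0.le]
      _ ≤ t * (4 * u) := by nlinarith
  rw [abs_sub_comm, abs_of_nonneg (by linarith)]
  exact le_of_mul_le_mul_left hdiff ht0

lemma isLittleO_const_mul_sqrt_div_const {l : ℝ} (hl : 0 < l) :
    (fun C => l * C) =o[𝓝[>] 0] fun C => √(C / l) := by
  have hfactor : Tendsto (fun C => l * √(l * C)) (𝓝[>] 0) (𝓝 0) := by
    have : Continuous fun C => l * √(l * C) := by fun_prop
    simpa using (this.tendsto 0).mono_left nhdsWithin_le_nhds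
  refine (((isLittleO_one_iff ℝ).mpr hfactor).mul_isBigO
    (isBigO_refl (fun C => √(C / l)) _)).congr' ?_ (by simp)
  filter_upwards [self_mem_nhdsWithin] with C (hC : 0 < C)
  have hprod : √(l * C) * √(C / l) = C := by
    rw [← sqrt_mul (by positivity), show l * C * (C / l) = C ^ 2 by field_simp]
    exact sqrt_sq hC.le
  rw [mul_assoc, hprod]

lemma sqrt_two_mul_div {l : ℝ} (hl : 0 < l) (C : ℝ) : √(2 * C / l) = √(2 * l * C) / l := by
  rw [eq_div_iff hl.ne', ← sqrt_sq hl.le, ← sqrt_mul' _ (by positivity), sqrt_sq hl.le]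
  congr 1
  field_simp

/-- If z(C) > 0 satisfies (z − 1)e^z = −e^{−λC}, then as C → 0⁺,
z = √(2λC) + O(λC); consequently T = z/λ + C = √(2C/λ) + C + o(√(C/λ)). -/
theorem young_first_order (l : ℝ) (hl : 0 < l) (z : ℝ → ℝ)
    (hz : ∀ C : ℝ, 0 < C → 0 < z C ∧
      (z C - 1) * Real.exp (z C) = -Real.exp (-(l * C))) :
    (fun C => z C - Real.sqrt (2 * l * C)) =O[nhdsWithin 0 (Set.Ioi 0)]
      (fun C => l * C) ∧
    (fun C => (z C / l + C) - (Real.sqrt (2 * C / l) + C))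
      =o[nhdsWithin 0 (Set.Ioi 0)] (fun C => Real.sqrt (C / l)) := by
  have hO : (fun C => z C - √(2 * l * C)) =O[𝓝[>] 0] fun C => l * C := by
    refine IsBigO.of_bound 4 ?_
    filter_upwards [Ioo_mem_nhdsGT (show (0 : ℝ) < 2 / l by positivity)] with C ⟨hC0, hC2⟩
    obtain ⟨hzC, heq⟩ := hz C hC0
    have hlC : 0 < l * C := mul_pos hl hC0
    rw [norm_eq_abs, norm_eq_abs, abs_of_pos hlC, mul_assoc]
    exact abs_sub_sqrt_two_mul_le_of_one_sub_mul_exp_eq hlC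
      (by rw [lt_div_iff₀ hl, mul_comm] at hC2; exact hC2.le) hzC.le (by linear_combination -heq)
  refine ⟨hO, ((hO.const_mul_left l⁻¹).trans_isLittleO
    (isLittleO_const_mul_sqrt_div_const hl)).congr (fun C => ?_) (fun _ => rfl)⟩
  rw [sqrt_two_mul_div hl]
  field_simp
  ring
end

section
/- The waste function Waste(T) = T/(2μ) + C(1 − (D+R+μd)/μ)/T + (D+R+μd − C/2)/μ, defined for T > 0, is uniquely minimized at T_opt = √(2C(μ − D − R − μd)), provided μ > D + R + μd and C > 0. -/
open Set

/-! The waste is `a * T + b / T` plus a constant, with `a = 1 / (2μ)` and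
`b = C (1 - (D + R + μd) / μ)`. Whenever `a * T₀ ^ 2 = b`, completing the square gives
`(a * T + b / T) - (a * T₀ + b / T₀) = a (T - T₀)² / T`, which is nonnegative for `T > 0`
and vanishes only at `T = T₀`. The optimum `T_opt` is such a `T₀`. -/

theorem mul_add_div_sub_mul_add_div_of_mul_sq_eq {a b T T₀ : ℝ} (hT : T ≠ 0)
    (h : a * T₀ ^ 2 = b) :
    (a * T + b / T) - (a * T₀ + b / T₀) = a * (T - T₀) ^ 2 / T := by
  subst h
  field_simp
  ring

theorem mul_add_div_le_of_mul_sq_eq {a b T T₀ : ℝ} (ha : 0 ≤ a) (hT : 0 < T)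
    (h : a * T₀ ^ 2 = b) :
    a * T₀ + b / T₀ ≤ a * T + b / T := by
  have hdiff := mul_add_div_sub_mul_add_div_of_mul_sq_eq hT.ne' h
  have : 0 ≤ a * (T - T₀) ^ 2 / T := by positivity
  linarith

theorem eq_of_mul_add_div_eq_of_mul_sq_eq {a b T T₀ : ℝ} (ha : a ≠ 0) (hT : T ≠ 0)
    (h : a * T₀ ^ 2 = b) (heq : a * T + b / T = a * T₀ + b / T₀) :
    T = T₀ := by
  have hdiff := mul_add_div_sub_mul_add_div_of_mul_sq_eq hT h
  rw [heq, sub_self, eq_comm, div_eq_zero_iff] at hdiff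
  simpa [ha, hT, sub_eq_zero] using hdiff

/-- The waste function Waste(T) = T/(2μ) + C(1−(D+R+μd)/μ)/T + (D+R+μd−C/2)/μ
is uniquely minimized over T > 0 at T_opt = √(2C(μ − D − R − μd)). -/
theorem waste_unique_minimizer (mu C D R mud : ℝ) (hC : 0 < C)
    (hD : 0 ≤ D) (hR : 0 ≤ R) (hmud : 0 ≤ mud) (hmu : D + R + mud < mu) :
    let Waste : ℝ → ℝ := fun T =>
      T / (2 * mu) + C * (1 - (D + R + mud) / mu) / T + (D + R + mud - C / 2) / mu
    let Topt := Real.sqrt (2 * C * (mu - D - R - mud))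
    0 < Topt ∧ (∀ T ∈ Ioi (0:ℝ), Waste Topt ≤ Waste T) ∧
      (∀ T ∈ Ioi (0:ℝ), Waste T = Waste Topt → T = Topt) := by
  intro Waste Topt
  have hmu0 : 0 < mu := by linarith
  have hslack : 0 < 2 * C * (mu - D - R - mud) := mul_pos (by positivity) (by linarith)
  have hTopt : 0 < Topt := Real.sqrt_pos.2 hslack
  set a := 1 / (2 * mu)
  set b := C * (1 - (D + R + mud) / mu)
  have hsq : a * Topt ^ 2 = b := by
    rw [Real.sq_sqrt hslack.le]
    simp only [a, b]
    field_simp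
    ring
  have hWaste (T : ℝ) : Waste T = a * T + b / T + (D + R + mud - C / 2) / mu := by
    simp only [Waste, a, b]
    ring
  refine ⟨hTopt, fun T hT => ?_, fun T hT heq => ?_⟩
  · rw [hWaste, hWaste, add_le_add_iff_right]
    exact mul_add_div_le_of_mul_sq_eq (by positivity) hT hsq
  · rw [hWaste, hWaste, add_left_inj] at heq
    exact eq_of_mul_add_div_eq_of_mul_sq_eq (by positivity) (ne_of_gt hT) hsq heq
end

section
/- In the pattern with k checkpoints and 1 verification, with per-error lost times T_lost(k) = R + 2V + w, T_lost(i) = (k−i+1)(R+V+w) + (k−i)C + V for 2 ≤ i ≤ k−1, and T_lost(1) = k(R+w) + (k−1)(C+V) + V, the average (1/k)Σᵢ₌₁ᵏ T_lost(i) together with downtime D yields Waste_fail = (1/(2kμ))((R+V)k² + (2D+R+2V+S−2C)k + S − 3V), where S = kw + kC + V. -/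
open Finset

lemma icc_sum_id (k : ℕ) : ∑ i ∈ Icc 1 k, (i : ℝ) = k * (k + 1) / 2 := by
  induction k with
  | zero => simp
  | succ n ih =>
    rw [Finset.sum_Icc_succ_top (by omega)]
    push_cast
    rw [ih]; ring

/-- Closed form of Waste_fail for the pattern with k checkpoints and 1 verification:
(D + (1/k)Σᵢ T_lost(i))/μ = (1/(2kμ))((R+V)k² + (2D+R+2V+S−2C)k + S − 3V),
where S = kw + kC + V. -/
theorem waste_fail_k_checkpoints (k : ℕ) (w C V R D mu : ℝ)
    (hk : 2 ≤ k) (hw : 0 < w) (hC : 0 < C) (hV : 0 < V) (hR : 0 < R)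
    (hD : 0 ≤ D) (hmu : 0 < mu) :
    let S : ℝ := k * w + k * C + V
    let Tlost : ℕ → ℝ := fun i =>
      if i = 1 then k * (R + w) + (k - 1) * (C + V) + V
      else if i = k then R + 2 * V + w
      else (k - i + 1) * (R + V + w) + (k - i) * C + V
    (D + (1 / k) * ∑ i ∈ Finset.Icc 1 k, Tlost i) / mu
      = (1 / (2 * k * mu)) *
        ((R + V) * k ^ 2 + (2 * D + R + 2 * V + S - 2 * C) * k + S - 3 * V) := by
  intro S Tlost
  have hk0 : (k : ℝ) ≠ 0 := by positivity
  have hsum : ∑ i ∈ Icc 1 k, Tlost i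
      = (R + V + w) * ((k : ℝ) * (k + 1) / 2) + C * ((k : ℝ) * (k + 1) / 2 - k)
        + k * V - V := by
    have hpt : ∀ i ∈ Icc 1 k, Tlost i
        = (((k : ℝ) - i + 1) * (R + V + w) + ((k : ℝ) - i) * C + V)
          - (if i = 1 then V else 0) := by
      intro i hi
      simp only [Finset.mem_Icc] at hi
      simp only [Tlost]
      rcases eq_or_ne i 1 with h1 | h1
      · subst h1; simp; ring
      · rcases eq_or_ne i k with h2 | h2
        · subst h2; simp [h1]; ring
        · simp [h1, h2]
    rw [Finset.sum_congr rfl hpt, Finset.sum_sub_distrib]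
    have hone : ∑ i ∈ Icc 1 k, (if i = 1 then V else 0) = V := by
      rw [Finset.sum_ite_eq' (Icc 1 k) 1 (fun _ => V)]
      simp [Finset.mem_Icc]; omega
    rw [hone]
    rw [Finset.sum_add_distrib, Finset.sum_add_distrib]
    simp only [← Finset.sum_mul, Finset.sum_const, Nat.card_Icc]
    have h1 : ∑ i ∈ Icc 1 k, ((k : ℝ) - i + 1) = (k : ℝ) * (k + 1) / 2 := by
      rw [Finset.sum_add_distrib, Finset.sum_sub_distrib, icc_sum_id,
        Finset.sum_const, Finset.sum_const, Nat.card_Icc]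
      have : (k + 1 - 1 : ℕ) = k := by omega
      rw [this]; ring
    have h2 : ∑ i ∈ Icc 1 k, ((k : ℝ) - i) = (k : ℝ) * (k + 1) / 2 - k := by
      rw [Finset.sum_sub_distrib, icc_sum_id, Finset.sum_const, Nat.card_Icc]
      have : (k + 1 - 1 : ℕ) = k := by omega
      rw [this]; ring
    rw [h1, h2]
    have : (k + 1 - 1 : ℕ) = k := by omega
    rw [this]; ring
  rw [hsum]
  simp only [S]
  field_simp
  ring
end
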